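/- Let G be a (Δ_D·F,F)-critical graph and v a vertex of G with degree exactly 2 and with distinct neighbors. Then for every (Δ_D·F,F)-coloring (M,F) of G − v, both neighbors of v are in F. -/

import Mathlib

/-- `M` is the first class of a `(Δ_D·F,F)`-coloring of `G`: `G[M]` is a forest with
maximum degree at most `D`, and `G[Mᶜ]` is a forest. -/
def IsDFFPart {V : Type*} (D : ℕ) (G : SimpleGraph V) (M : Set V) : Prop :=
  (G.induce M).IsAcyclic ∧ (∀ x ∈ M, ({u | u ∈ M ∧ G.Adj x u}).ncard ≤ D) ∧
    (G.induce Mᶜ).IsAcyclic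

/-- `G` has a `(Δ_D·F,F)`-coloring. -/
def HasDFF {V : Type*} (D : ℕ) (G : SimpleGraph V) : Prop :=
  ∃ M : Set V, IsDFFPart D G M

/-- `G` is `(Δ_D·F,F)`-critical. -/
def DFFCritical {V : Type*} (D : ℕ) (G : SimpleGraph V) : Prop :=
  ¬ HasDFF D G ∧
    ∀ (S : Set V) (H : SimpleGraph S), H ≤ G.induce S →
      ¬ (S = Set.univ ∧ ∀ a b : S, H.Adj a b ↔ G.Adj (a : V) (b : V)) →
      HasDFF D H

/-- Acyclicity pulls back along injective graph homomorphisms. -/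
private lemma acyclic_of_hom {A B : Type*} {G1 : SimpleGraph A} {G2 : SimpleGraph B}
    (f : G1 →g G2) (hinj : Function.Injective f) (h2 : G2.IsAcyclic) : G1.IsAcyclic :=
  fun _ c hc => h2 (c.map f) ((SimpleGraph.Walk.map_isCycle_iff_of_injective hinj).2 hc)

/-- A cycle based at `w` gives two distinct neighbors of `w`. -/
private lemma cycle_two_nbrs {α : Type*} {H : SimpleGraph α} {w : α} {c : H.Walk w w}
    (hc : c.IsCycle) : ∃ a b : α, a ≠ b ∧ H.Adj w a ∧ H.Adj w b := by
  cases c with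
  | nil => exact absurd rfl hc.ne_nil
  | @cons _ m _ h q =>
    have h3 := hc.three_le_length
    have hql : 2 ≤ q.length := by
      simp only [SimpleGraph.Walk.length_cons] at h3; omega
    have hd : q.darts ≠ [] := by
      intro he
      have := q.length_darts
      rw [he] at this
      simp at this
      omega
    set d := q.darts.getLast hd with hdd
    have hsnd : d.snd = w := by rw [hdd, q.getLast_darts_eq_lastDart hd]; rfl
    have hmem : d ∈ q.darts := List.getLast_mem hd
    refine ⟨m, d.fst, ?_, h, (hsnd ▸ d.adj).symm⟩
    intro heq
    have hedge : d.edge ∈ q.edges := List.mem_map_of_mem hmem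
    have hde : d.edge = s(w, m) := by
      have : d.edge = s(d.fst, d.snd) := rfl
      rw [this, hsnd, ← heq, Sym2.eq_swap]
    have hnodup := hc.edges_nodup
    rw [SimpleGraph.Walk.edges_cons, List.nodup_cons] at hnodup
    exact hnodup.1 (hde ▸ hedge)

/-- A walk whose support lies in `s` lifts to the induced subgraph on `s`. -/
private lemma lift_walk {α : Type*} {H : SimpleGraph α} {s : Set α} :
    ∀ {a b : α} (p : H.Walk a b) (ha : a ∈ s) (hb : b ∈ s),
      (∀ u ∈ p.support, u ∈ s) →
      ∃ q : (H.induce s).Walk ⟨a, ha⟩ ⟨b, hb⟩,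
        q.map (SimpleGraph.Embedding.induce s).toHom = p := by
  intro a b p
  induction p with
  | nil => intro ha hb _; exact ⟨SimpleGraph.Walk.nil, rfl⟩
  | @cons u m w h p ih =>
    intro ha hb hsup
    have hm : m ∈ s := hsup m (by simp)
    obtain ⟨q, hq⟩ := ih hm hb (fun u hu => hsup u (by simp [hu]))
    refine ⟨SimpleGraph.Walk.cons (by simpa using h) q, ?_⟩
    simp [hq]

/-- Key step: in the situation of `critical_deg_two_neighbors_in_F`, no neighbor of `v`
can lie in `M`, since otherwise the coloring of `G − v` would extend to `G`. -/
private lemma key_not_mem {V : Type*} (D : ℕ) (G : SimpleGraph V)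
    (hcrit : DFFCritical D G) (v x y : V) (hxy : x ≠ y)
    (hvx : G.Adj v x) (hvy : G.Adj v y)
    (hN : ∀ u, G.Adj v u → u = x ∨ u = y)
    (M : Set ({v}ᶜ : Set V)) (hM : IsDFFPart D (G.induce ({v}ᶜ : Set V)) M)
    (z : V) (hz : z = x ∨ z = y) (hzc : z ∈ ({v}ᶜ : Set V))
    (hzM : (⟨z, hzc⟩ : ({v}ᶜ : Set V)) ∈ M) : False := by
  classical
  set M' : Set V := Subtype.val '' M with hM'def
  have hvM' : v ∉ M' := by
    rintro ⟨w, hw, hwv⟩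
    exact w.2 (by simp [hwv])
  have hzM' : z ∈ M' := ⟨⟨z, hzc⟩, hzM, rfl⟩
  have hsub : ∀ u : V, u ∈ M' → u ∈ ({v}ᶜ : Set V) := by
    rintro u ⟨w, hw, rfl⟩; exact w.2
  have hmem : ∀ (u : V) (hu : u ∈ M'), (⟨u, hsub u hu⟩ : ({v}ᶜ : Set V)) ∈ M := by
    rintro u ⟨w, hw, rfl⟩; exact hw
  apply hcrit.1
  refine ⟨M', ?_, ?_, ?_⟩
  · -- acyclicity of G.induce M'
    refine acyclic_of_hom
      (⟨fun u => ⟨⟨u.1, hsub u.1 u.2⟩, hmem u.1 u.2⟩, fun h => h⟩ :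
        G.induce M' →g (G.induce ({v}ᶜ : Set V)).induce M) ?_ hM.1
    intro a b hab
    exact Subtype.ext (congrArg (fun t => t.1.1) hab)
  · -- degree bound
    intro u hu
    have hset : {w | w ∈ M' ∧ G.Adj u w} =
        Subtype.val '' {w : ({v}ᶜ : Set V) | w ∈ M ∧
          (G.induce ({v}ᶜ : Set V)).Adj ⟨u, hsub u hu⟩ w} := by
      ext w
      constructor
      · rintro ⟨⟨w', hw', rfl⟩, hadj⟩
        exact ⟨w', ⟨hw', hadj⟩, rfl⟩
      · rintro ⟨w', ⟨hw', hadj⟩, rfl⟩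
        exact ⟨⟨w', hw', rfl⟩, hadj⟩
    rw [hset, Set.ncard_image_of_injective _ Subtype.val_injective]
    exact hM.2.1 _ (hmem u hu)
  · -- acyclicity of G.induce M'ᶜ
    intro a c hc
    by_cases hvs : (⟨v, hvM'⟩ : ↥(M'ᶜ)) ∈ c.support
    · have hc' := hc.rotate hvs
      obtain ⟨u₁, u₂, hne, h1, h2⟩ := cycle_two_nbrs hc'
      have h1' : G.Adj v (u₁ : V) := h1
      have h2' : G.Adj v (u₂ : V) := h2
      have hval : (u₁ : V) ≠ (u₂ : V) := fun he => hne (Subtype.ext he)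
      rcases hz with rfl | rfl <;>
        rcases hN _ h1' with h1e | h1e <;>
        rcases hN _ h2' with h2e | h2e <;>
        first
          | exact absurd (h1e.trans h2e.symm) hval
          | exact u₁.2 (by rw [h1e]; exact hzM')
          | exact u₂.2 (by rw [h2e]; exact hzM')
    · set s : Set ↥(M'ᶜ) := {u | u ≠ ⟨v, hvM'⟩} with hsdef
      have hsupp : ∀ u ∈ c.support, u ∈ s := fun u hu he => hvs (he ▸ hu)
      obtain ⟨q, hq⟩ := lift_walk c (hsupp a c.start_mem_support)
        (hsupp a c.start_mem_support) hsupp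
      have hqc : q.IsCycle := by
        rw [← SimpleGraph.Walk.map_isCycle_iff_of_injective
          (f := (SimpleGraph.Embedding.induce s).toHom) Subtype.val_injective, hq]
        exact hc
      have hg : ((G.induce M'ᶜ).induce s).IsAcyclic := by
        refine acyclic_of_hom
          (⟨fun u => ⟨⟨u.1.1, fun hh => u.2 (Subtype.ext hh)⟩,
            fun hm => u.1.2 ⟨_, hm, rfl⟩⟩, fun h => h⟩ :
            (G.induce M'ᶜ).induce s →g (G.induce ({v}ᶜ : Set V)).induce Mᶜ) ?_ hM.2.2
        intro a b hab
        exact Subtype.ext (Subtype.ext (congrArg (fun t => t.1.1) hab))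
      exact hg q hqc

/-- If `G` is `(Δ_D·F,F)`-critical and `v` has degree exactly `2`, with distinct
neighbors `x` and `y`, then in every `(Δ_D·F,F)`-coloring `(M, F)` of `G − v`,
both neighbors of `v` lie in `F`. -/
theorem critical_deg_two_neighbors_in_F {V : Type*} (D : ℕ) (G : SimpleGraph V)
    (hcrit : DFFCritical D G) (v x y : V) (hxy : x ≠ y)
    (hvx : G.Adj v x) (hvy : G.Adj v y)
    (hN : ∀ u, G.Adj v u → u = x ∨ u = y) :
    ∀ M : Set ({v}ᶜ : Set V), IsDFFPart D (G.induce ({v}ᶜ : Set V)) M →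
      (⟨x, by simpa using hvx.ne'⟩ : ({v}ᶜ : Set V)) ∉ M ∧
      (⟨y, by simpa using hvy.ne'⟩ : ({v}ᶜ : Set V)) ∉ M := by
  intro M hM
  constructor
  · intro hxM
    exact key_not_mem D G hcrit v x y hxy hvx hvy hN M hM x (Or.inl rfl) _ hxM
  · intro hyM
    exact key_not_mem D G hcrit v x y hxy hvx hvy hN M hM y (Or.inr rfl) _ hyM
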